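/- arXiv:math/0105179 — 2 statements merged into one kernel-verified Lean document; each statement's English description precedes it below -/
import Mathlib

section
/- Let s, s' be nonzero reals and let Γ'_s be the subgroup of affine transformations of ℝ² generated by l_{1}(x,y)=(x+1,y) and l'_{2,s}(x,y)=(x+2y+s, y+s). If an affine transformation A of ℝ² satisfies A ∘ l_1 ∘ A⁻¹ = l_1 and A ∘ l'_{2,s'} ∘ A⁻¹ = l'_{2,s}, then the linear part of A is upper triangular of the form [[1, b],[0, 1]] and s = s'. -/
/-- If an affine transformation `A(x,y) = (a x + b y + e, c x + d y + f)` of `ℝ²` conjugates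
`l₁(x,y) = (x+1,y)` to itself and `l'_{2,s'}(x,y) = (x+2y+s', y+s')` to
`l'_{2,s}(x,y) = (x+2y+s, y+s)`, then its linear part is `[[1,b],[0,1]]` and `s = s'`. -/
theorem stmt_1 (s s' : ℝ) (hs : 0 < s) (hs' : 0 < s')
    (a b c d e f : ℝ) (hdet : a * d - b * c ≠ 0)
    (A : ℝ × ℝ → ℝ × ℝ)
    (hA : ∀ p : ℝ × ℝ, A p = (a * p.1 + b * p.2 + e, c * p.1 + d * p.2 + f))
    (h1 : ∀ p : ℝ × ℝ, A (p.1 + 1, p.2) = ((A p).1 + 1, (A p).2))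
    (h2 : ∀ p : ℝ × ℝ, A (p.1 + 2 * p.2 + s', p.2 + s') =
      ((A p).1 + 2 * (A p).2 + s, (A p).2 + s)) :
    a = 1 ∧ d = 1 ∧ c = 0 ∧ s = s' := by
  have e1 := h1 (0, 0)
  have e2 := h2 (0, 0)
  have e3 := h2 (0, 1)
  simp only [hA, Prod.mk.injEq] at e1 e2 e3
  obtain ⟨e11, e12⟩ := e1
  obtain ⟨e21, e22⟩ := e2
  obtain ⟨e31, e32⟩ := e3
  have ha : a = 1 := by linarith
  have hc : c = 0 := by linarith
  have hd : d = 1 := by nlinarith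
  refine ⟨ha, hd, hc, ?_⟩
  nlinarith
end

section
/- Let Γ'_{r,s,t} be the subgroup of Aff(ℝ²) generated by α₁(x,y) = (x+s, y) and α₂(x,y) = (x + 2rty + rt², y + t), obtained by conjugating the translation lattice generated by (x,y)↦(x+s,y) and (x,y)↦(x,y+t) by φ_r(x,y) = (x + r y², y). For nonzero s,t,s',t' and a fixed a = rt = r't', the map f' = φ_{a/t'} ∘ m ∘ φ_{-a/t}, where m(x,y) = ((s'/s)x, (t'/t)y), conjugates Γ'_{a/t,s,t} onto Γ'_{a/t',s',t'}, and f'(x,y) = ((s'/s)x + a((st' - s't)/(st²))y², (t'/t)y). -/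
/-- The polynomial map `φ_r(x,y) = (x + r y², y)`. -/
def phi (r : ℝ) : ℝ × ℝ → ℝ × ℝ := fun p => (p.1 + r * p.2 ^ 2, p.2)

/-- With `a = r t = r' t'`, the map `f' = φ_{a/t'} ∘ m ∘ φ_{-a/t}` (where
`m(x,y) = ((s'/s)x, (t'/t)y)`) is given by
`f'(x,y) = ((s'/s)x + a((st'-s't)/(st²))y², (t'/t)y)`, and it conjugates the generators
`α₁, α₂` of `Γ'_{a/t,s,t}` onto the generators of `Γ'_{a/t',s',t'}`. -/
theorem stmt_13 (a s t s' t' : ℝ) (hs : s ≠ 0) (ht : t ≠ 0) (hs' : s' ≠ 0) (ht' : t' ≠ 0)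
    (m minv : ℝ × ℝ → ℝ × ℝ)
    (hm : ∀ p, m p = ((s' / s) * p.1, (t' / t) * p.2))
    (hminv : ∀ p, minv p = ((s / s') * p.1, (t / t') * p.2))
    (f' f'inv : ℝ × ℝ → ℝ × ℝ)
    (hf' : f' = phi (a / t') ∘ m ∘ phi (-(a / t)))
    (hf'inv : f'inv = phi (a / t) ∘ minv ∘ phi (-(a / t'))) :
    (∀ p : ℝ × ℝ, f' p =
      ((s' / s) * p.1 + a * ((s * t' - s' * t) / (s * t ^ 2)) * p.2 ^ 2, (t' / t) * p.2)) ∧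
    (f' ∘ (fun p : ℝ × ℝ => (p.1 + s, p.2)) ∘ f'inv = fun p => (p.1 + s', p.2)) ∧
    (f' ∘ (fun p : ℝ × ℝ => (p.1 + 2 * (a / t) * t * p.2 + (a / t) * t ^ 2, p.2 + t)) ∘ f'inv
      = fun p => (p.1 + 2 * (a / t') * t' * p.2 + (a / t') * t' ^ 2, p.2 + t')) := by
  subst hf' hf'inv
  refine ⟨?_, ?_, ?_⟩
  · intro p
    simp only [Function.comp_apply, phi, hm, Prod.mk.injEq]
    constructor
    · field_simp
      ring
    · trivial
  · funext p
    simp only [Function.comp_apply, phi, hm, hminv, Prod.mk.injEq]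
    constructor
    · field_simp
      ring
    · field_simp
  · funext p
    simp only [Function.comp_apply, phi, hm, hminv, Prod.mk.injEq]
    constructor
    · field_simp
      ring
    · field_simp
end
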